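/- arXiv:1712.07819 — 8 statements merged into one kernel-verified Lean document; each statement's English description precedes it below -/
import Mathlib

section
/- The equation (1-q)^2·log(1-q) + (1+q)^2·log(1+q) + (1-q^2)·log(1-q^2) = 2 (logarithm base 2) has a solution q in the interval [0.5, 1], and this solution satisfies 0.77 < q < 0.79. -/
lemma logb_two_zpow (m : ℤ) : Real.logb 2 ((2:ℝ) ^ m) = m := by
  rw [Real.logb, Real.log_zpow, mul_div_assoc, div_self (Real.log_pos (by norm_num)).ne',
    mul_one]

lemma logb_lt_of_pow {x : ℝ} (hx : 0 < x) (n : ℕ) (m : ℤ) (hn : 0 < n)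
    (h : x ^ n < (2:ℝ) ^ m) : Real.logb 2 x < (m : ℝ) / n := by
  have h1 : Real.logb 2 (x ^ n) < Real.logb 2 ((2:ℝ) ^ m) :=
    Real.logb_lt_logb (by norm_num) (pow_pos hx n) h
  rw [Real.logb_pow, logb_two_zpow] at h1
  rw [lt_div_iff₀ (by exact_mod_cast hn : (0:ℝ) < n), mul_comm]
  exact h1

lemma lt_logb_of_pow {x : ℝ} (hx : 0 < x) (n : ℕ) (m : ℤ) (hn : 0 < n)
    (h : (2:ℝ) ^ m < x ^ n) : (m : ℝ) / n < Real.logb 2 x := by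
  have h1 : Real.logb 2 ((2:ℝ) ^ m) < Real.logb 2 (x ^ n) :=
    Real.logb_lt_logb (by norm_num) (zpow_pos (by norm_num) m) h
  rw [Real.logb_pow, logb_two_zpow] at h1
  rw [div_lt_iff₀ (by exact_mod_cast hn : (0:ℝ) < n), mul_comm]
  exact h1

/-- The equation (1-q)²·log₂(1-q) + (1+q)²·log₂(1+q) + (1-q²)·log₂(1-q²) = 2
has a solution q ∈ [0.5, 1] with 0.77 < q < 0.79. -/
theorem stmt0 :
    ∃ q ∈ Set.Icc (0.5 : ℝ) 1,
      (1 - q)^2 * Real.logb 2 (1 - q) + (1 + q)^2 * Real.logb 2 (1 + q)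
        + (1 - q^2) * Real.logb 2 (1 - q^2) = 2 ∧
      0.77 < q ∧ q < 0.79 := by
  set g : ℝ → ℝ := fun q =>
    (1 - q)^2 * Real.logb 2 (1 - q) + (1 + q)^2 * Real.logb 2 (1 + q)
      + (1 - q^2) * Real.logb 2 (1 - q^2) with hg
  -- continuity on [0.77, 0.79]
  have hcont : ContinuousOn g (Set.Icc (0.77:ℝ) 0.79) := by
    have h1 : ∀ x ∈ Set.Icc (0.77:ℝ) 0.79, (1 - x) ≠ 0 := by
      intro x hx; rw [Set.mem_Icc] at hx; nlinarith [hx.1, hx.2]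
    have h2 : ∀ x ∈ Set.Icc (0.77:ℝ) 0.79, (1 + x) ≠ 0 := by
      intro x hx; rw [Set.mem_Icc] at hx; nlinarith [hx.1, hx.2]
    have h3 : ∀ x ∈ Set.Icc (0.77:ℝ) 0.79, (1 - x^2) ≠ 0 := by
      intro x hx; rw [Set.mem_Icc] at hx; nlinarith [hx.1, hx.2]
    simp only [hg, Real.logb]
    apply ContinuousOn.add
    apply ContinuousOn.add
    · exact ((continuousOn_const.sub continuousOn_id).pow 2).mul
        (((continuousOn_const.sub continuousOn_id).log h1).div_const _)
    · exact ((continuousOn_const.add continuousOn_id).pow 2).mul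
        (((continuousOn_const.add continuousOn_id).log h2).div_const _)
    · exact (continuousOn_const.sub (continuousOn_id.pow 2)).mul
        (((continuousOn_const.sub (continuousOn_id.pow 2)).log h3).div_const _)
  -- value at 0.77 is < 2
  have hL1 : Real.logb 2 ((23:ℝ)/100) < (-53 : ℤ) / (25 : ℕ) := by
    apply logb_lt_of_pow (by norm_num) 25 (-53) (by norm_num)
    rw [zpow_neg, lt_inv_comm₀ (by positivity) (by positivity)]
    norm_num
  have hL2 : Real.logb 2 ((177:ℝ)/100) < (21 : ℤ) / (25 : ℕ) := by
    apply logb_lt_of_pow (by norm_num) 25 21 (by norm_num)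
    norm_num
  have hmul77 : Real.logb 2 ((4071:ℝ)/10000) = Real.logb 2 ((23:ℝ)/100) + Real.logb 2 ((177:ℝ)/100) := by
    rw [show ((4071:ℝ)/10000) = (23/100) * (177/100) by norm_num,
      Real.logb_mul (by norm_num) (by norm_num)]
  have hlow : g 0.77 < 2 := by
    have : g 0.77 = 0.46 * Real.logb 2 ((23:ℝ)/100) + 3.54 * Real.logb 2 ((177:ℝ)/100) := by
      simp only [hg]
      norm_num
      rw [hmul77]; ring
    rw [this]
    push_cast at hL1 hL2
    nlinarith [hL1, hL2]
  -- value at 0.79 is > 2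
  have hL1' : (-113 : ℤ) / (50 : ℕ) < Real.logb 2 ((21:ℝ)/100) := by
    apply lt_logb_of_pow (by norm_num) 50 (-113) (by norm_num)
    rw [zpow_neg, inv_lt_comm₀ (by positivity) (by positivity)]
    norm_num
  have hL2' : (83 : ℤ) / (100 : ℕ) < Real.logb 2 ((179:ℝ)/100) := by
    apply lt_logb_of_pow (by norm_num) 100 83 (by norm_num)
    norm_num
  have hmul79 : Real.logb 2 ((3759:ℝ)/10000) = Real.logb 2 ((21:ℝ)/100) + Real.logb 2 ((179:ℝ)/100) := by
    rw [show ((3759:ℝ)/10000) = (21/100) * (179/100) by norm_num,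
      Real.logb_mul (by norm_num) (by norm_num)]
  have hhigh : 2 < g 0.79 := by
    have : g 0.79 = 0.42 * Real.logb 2 ((21:ℝ)/100) + 3.58 * Real.logb 2 ((179:ℝ)/100) := by
      simp only [hg]
      norm_num
      rw [hmul79]; ring
    rw [this]
    push_cast at hL1' hL2'
    nlinarith [hL1', hL2']
  -- intermediate value theorem
  have hsub : Set.Ioo (g 0.77) (g 0.79) ⊆ g '' Set.Ioo (0.77:ℝ) 0.79 :=
    intermediate_value_Ioo (by norm_num) hcont
  obtain ⟨q, hqmem, hq⟩ := hsub ⟨hlow, hhigh⟩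
  rw [Set.mem_Ioo] at hqmem
  refine ⟨q, ?_, hq, hqmem.1, hqmem.2⟩
  rw [Set.mem_Icc]
  constructor <;> linarith [hqmem.1, hqmem.2]
end

section
/- The function τ̃(p) = 1 + α²·log(α²) + β²·log(β²) + 2αβ·log(αβ), where α = (1-p)/2 and β = (1+p)/2 and log is base 2, is strictly increasing on the interval [0.5, 1]. -/
open Real

noncomputable def Faux : ℝ → ℝ := fun p =>
  1 + 2 / Real.log 2 * (((1 - p) / 2) * Real.log ((1 - p) / 2)
      + ((1 + p) / 2) * Real.log ((1 + p) / 2))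

lemma Faux_cont : Continuous Faux := by
  have h1 : Continuous fun p : ℝ => ((1 - p) / 2) * Real.log ((1 - p) / 2) :=
    Real.continuous_mul_log.comp (by continuity)
  have h2 : Continuous fun p : ℝ => ((1 + p) / 2) * Real.log ((1 + p) / 2) :=
    Real.continuous_mul_log.comp (by continuity)
  unfold Faux
  continuity

lemma Faux_mono : StrictMonoOn Faux (Set.Icc (0.5 : ℝ) 1) := by
  apply strictMonoOn_of_deriv_pos (convex_Icc _ _) Faux_cont.continuousOn
  intro p hp
  rw [interior_Icc] at hp
  obtain ⟨hp1, hp2⟩ := hp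
  set a : ℝ := (1 - p) / 2 with ha
  set b : ℝ := (1 + p) / 2 with hb
  have ha0 : 0 < a := by rw [ha]; linarith
  have hab : a < b := by rw [ha, hb]; linarith
  have hda : HasDerivAt (fun p : ℝ => (1 - p) / 2) (-(1/2)) p := by
    have := ((hasDerivAt_id p).const_sub 1).div_const 2
    simpa [neg_div] using this
  have hdb : HasDerivAt (fun p : ℝ => (1 + p) / 2) (1/2) p := by
    simpa using ((hasDerivAt_id p).const_add 1).div_const 2
  have h1 : HasDerivAt (fun p : ℝ => ((1 - p) / 2) * Real.log ((1 - p) / 2))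
      ((Real.log a + 1) * (-(1/2))) p :=
    by have := (Real.hasDerivAt_mul_log (x := (1 - p) / 2) (ne_of_gt ha0)).comp p hda; exact this
  have h2 : HasDerivAt (fun p : ℝ => ((1 + p) / 2) * Real.log ((1 + p) / 2))
      ((Real.log b + 1) * (1/2)) p :=
    by have := (Real.hasDerivAt_mul_log (x := (1 + p) / 2) (ne_of_gt (show (0:ℝ) < (1+p)/2 by norm_num at hp1; linarith))).comp p hdb; exact this
  have hF : HasDerivAt Faux
      (2 / Real.log 2 * ((Real.log a + 1) * (-(1/2)) + (Real.log b + 1) * (1/2))) p :=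
    (((h1.add h2).const_mul (2 / Real.log 2)).const_add 1)
  rw [hF.deriv]
  have hlog : Real.log a < Real.log b := Real.log_lt_log ha0 hab
  have h2pos : (0:ℝ) < Real.log 2 := Real.log_pos one_lt_two
  have : (Real.log a + 1) * (-(1/2)) + (Real.log b + 1) * (1/2)
      = (Real.log b - Real.log a) / 2 := by ring
  rw [this]
  exact mul_pos (div_pos two_pos h2pos) (by linarith)

lemma eq_on : Set.EqOn (fun p : ℝ =>
      1 + ((1 - p) / 2)^2 * Real.logb 2 (((1 - p) / 2)^2)
        + ((1 + p) / 2)^2 * Real.logb 2 (((1 + p) / 2)^2)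
        + 2 * ((1 - p) / 2) * ((1 + p) / 2) * Real.logb 2 (((1 - p) / 2) * ((1 + p) / 2)))
      Faux (Set.Icc (0.5 : ℝ) 1) := by
  intro p hp
  obtain ⟨hp1, hp2⟩ := hp
  simp only [Faux, Real.logb]
  set a : ℝ := (1 - p) / 2 with ha
  set b : ℝ := (1 + p) / 2 with hb
  have hb0 : 0 < b := by rw [hb]; norm_num at hp1 ⊢; linarith
  have ha0 : 0 ≤ a := by rw [ha]; linarith
  have h2pos : (0:ℝ) < Real.log 2 := Real.log_pos one_lt_two
  rcases eq_or_lt_of_le ha0 with h0 | h0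
  · have hpa : p = 1 := by rw [ha] at h0; linarith [h0]
    have hb1 : b = 1 := by rw [hb, hpa]; norm_num
    rw [← h0, hb1]
    simp
  · have hla : Real.log (a^2) = 2 * Real.log a := by
      rw [show a^2 = a*a by ring, Real.log_mul (ne_of_gt h0) (ne_of_gt h0)]; ring
    have hlb : Real.log (b^2) = 2 * Real.log b := by
      rw [show b^2 = b*b by ring, Real.log_mul (ne_of_gt hb0) (ne_of_gt hb0)]; ring
    have hlab : Real.log (a*b) = Real.log a + Real.log b :=
      Real.log_mul (ne_of_gt h0) (ne_of_gt hb0)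
    have hsum : a + b = 1 := by rw [ha, hb]; ring
    rw [hla, hlb, hlab]
    have hne := ne_of_gt h2pos
    field_simp
    linear_combination (2*a*Real.log a + 2*b*Real.log b) * Real.log 2 * hsum

/-- τ̃(p) = 1 + α²log₂α² + β²log₂β² + 2αβ·log₂(αβ), α=(1-p)/2, β=(1+p)/2,
is strictly increasing on [0.5, 1]. -/
theorem stmt1 :
    StrictMonoOn (fun p : ℝ =>
      1 + ((1 - p) / 2)^2 * Real.logb 2 (((1 - p) / 2)^2)
        + ((1 + p) / 2)^2 * Real.logb 2 (((1 + p) / 2)^2)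
        + 2 * ((1 - p) / 2) * ((1 + p) / 2) * Real.logb 2 (((1 - p) / 2) * ((1 + p) / 2)))
      (Set.Icc (0.5 : ℝ) 1) := by
  intro x hx y hy hxy
  rw [eq_on hx, eq_on hy]
  exact Faux_mono hx hy hxy
end

section
/- Let p ∈ (0, 1) be fixed and C = {(x, y) ∈ ℝ² : x ≥ 0, y ≥ 0, x + y ≤ (1-p)/2}. Define τ(x,y) = -(p+x)·log(p+x) - x·log x - 2y·log y + (p+x+y)·log(p+x+y) + (x+y)·log(x+y) + (1-p) - 2(x+y) (base-2 log, 0·log 0 = 0). Then τ has no critical point in the interior of C; specifically, at every interior point (x,y) with x, y > 0 and x + y < (1-p)/2, not both partial derivatives ∂τ/∂x = log((x+y)(p+x+y)/(4x(p+x))) and ∂τ/∂y = log((x+y)(p+x+y)/(4y²)) vanish. -/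
/-- τ has no interior critical point: for p ∈ (0,1) and x,y > 0 with x+y < (1-p)/2,
the two partial derivatives of τ cannot both vanish. -/
theorem stmt4 (p : ℝ) (hp : p ∈ Set.Ioo (0 : ℝ) 1) (x y : ℝ)
    (hx : 0 < x) (hy : 0 < y) (hxy : x + y < (1 - p) / 2) :
    ¬ (Real.logb 2 ((x + y) * (p + x + y) / (4 * x * (p + x))) = 0 ∧
       Real.logb 2 ((x + y) * (p + x + y) / (4 * y^2)) = 0) := by
  rintro ⟨h1, h2⟩
  obtain ⟨hp0, hp1⟩ := hp
  have hnum : 0 < (x + y) * (p + x + y) := by positivity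
  have hd1 : 0 < 4 * x * (p + x) := by positivity
  have hd2 : 0 < 4 * y ^ 2 := by positivity
  have hq1 := div_pos hnum hd1
  have hq2 := div_pos hnum hd2
  have ha1 : (x + y) * (p + x + y) / (4 * x * (p + x)) = 1 := by
    rcases Real.logb_eq_zero.mp h1 with h | h | h | h | h | h
    · norm_num at h
    · norm_num at h
    · norm_num at h
    · linarith
    · exact h
    · linarith
  have ha2 : (x + y) * (p + x + y) / (4 * y ^ 2) = 1 := by
    rcases Real.logb_eq_zero.mp h2 with h | h | h | h | h | h
    · norm_num at h
    · norm_num at h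
    · norm_num at h
    · linarith
    · exact h
    · linarith
  have e1 : (x + y) * (p + x + y) = 4 * x * (p + x) := by
    field_simp at ha1; linarith
  have e2 : (x + y) * (p + x + y) = 4 * y ^ 2 := by
    field_simp at ha2; linarith
  have e3 : x * (p + x) = y ^ 2 := by nlinarith
  have e4 : 2 * x + p = 2 * y := by nlinarith
  nlinarith [sq_nonneg p]
end

section
/- Let p ∈ (q, 1) where q ≈ 0.78 is the root in [0.5,1] of (1-q)²log(1-q)+(1+q)²log(1+q)+(1-q²)log(1-q²)=2, let α = (1-p)/2 and β = (1+p)/2, and let C = {(x,y) : x ≥ 0, y ≥ 0, x + y ≤ (1-p)/2}. Define τ(x,y) = -(p+x)·log(p+x) - x·log x - 2y·log y + (p+x+y)·log(p+x+y) + (x+y)·log(x+y) + (1-p) - 2(x+y) (base-2 log, 0·log 0 = 0). Then for all (x,y) ∈ C, τ(x,y) ≤ -α²·log α² - β²·log β² - 2αβ·log(αβ) - h(α), with equality at (x,y) = (α², α - α²), where h is the binary entropy. -/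
/-- Gibbs' inequality (log-sum) in natural log. -/
lemma gibbs_log (a b u v : ℝ) (ha : 0 ≤ a) (hb : 0 ≤ b) (hu : 0 < u) (hv : 0 < v)
    (huv : u + v = 1) :
    (a + b) * Real.log (a + b) - a * Real.log a - b * Real.log b
      ≤ -(a * Real.log u) - b * Real.log v := by
  have hv1 : v < 1 := by linarith
  have hu1 : u < 1 := by linarith
  rcases eq_or_lt_of_le ha with rfl | ha0
  · simp only [zero_add, Real.log_zero, mul_zero, zero_mul, sub_zero, neg_zero, zero_sub]
    have : Real.log v < 0 := Real.log_neg hv hv1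
    nlinarith
  rcases eq_or_lt_of_le hb with rfl | hb0
  · simp only [add_zero, Real.log_zero, mul_zero, zero_mul, sub_zero, neg_zero]
    have : Real.log u < 0 := Real.log_neg hu hu1
    nlinarith
  have hab : 0 < a + b := by linarith
  have h1 : Real.log u + Real.log (a + b) - Real.log a ≤ u * (a + b) / a - 1 := by
    have h := Real.log_le_sub_one_of_pos (show (0:ℝ) < u * (a + b) / a by positivity)
    rwa [Real.log_div (by positivity) ha0.ne', Real.log_mul hu.ne' hab.ne'] at h
  have h2 : Real.log v + Real.log (a + b) - Real.log b ≤ v * (a + b) / b - 1 := by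
    have h := Real.log_le_sub_one_of_pos (show (0:ℝ) < v * (a + b) / b by positivity)
    rwa [Real.log_div (by positivity) hb0.ne', Real.log_mul hv.ne' hab.ne'] at h
  have h1' : a * Real.log u + a * Real.log (a + b) - a * Real.log a ≤ u * (a + b) - a := by
    have := mul_le_mul_of_nonneg_left h1 ha
    have ha' : a * (u * (a + b) / a - 1) = u * (a + b) - a := by field_simp
    nlinarith
  have h2' : b * Real.log v + b * Real.log (a + b) - b * Real.log b ≤ v * (a + b) - b := by
    have := mul_le_mul_of_nonneg_left h2 hb
    have hb' : b * (v * (a + b) / b - 1) = v * (a + b) - b := by field_simp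
    nlinarith
  have hsum : u * (a + b) + v * (a + b) = a + b := by rw [← add_mul, huv, one_mul]
  nlinarith [h1', h2']

/-- Gibbs' inequality in base-2 log. -/
lemma gibbs (a b u v : ℝ) (ha : 0 ≤ a) (hb : 0 ≤ b) (hu : 0 < u) (hv : 0 < v)
    (huv : u + v = 1) :
    (a + b) * Real.logb 2 (a + b) - a * Real.logb 2 a - b * Real.logb 2 b
      ≤ -(a * Real.logb 2 u) - b * Real.logb 2 v := by
  have hlog2 : (0:ℝ) < Real.log 2 := Real.log_pos one_lt_two
  have h := gibbs_log a b u v ha hb hu hv huv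
  simp only [Real.logb]
  calc (a + b) * (Real.log (a + b) / Real.log 2) - a * (Real.log a / Real.log 2)
        - b * (Real.log b / Real.log 2)
      = ((a + b) * Real.log (a + b) - a * Real.log a - b * Real.log b) / Real.log 2 := by
        ring
    _ ≤ (-(a * Real.log u) - b * Real.log v) / Real.log 2 :=
        (div_le_div_iff_of_pos_right hlog2).mpr h
    _ = -(a * (Real.log u / Real.log 2)) - b * (Real.log v / Real.log 2) := by ring


/-- For p > q (q the root of the threshold equation), the maximum of τ on the
triangle C is attained at (α², α-α²) with value
-α²log₂α² - β²log₂β² - 2αβ·log₂(αβ) - h(α). -/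
theorem stmt5 (q p : ℝ)
    (hq : q ∈ Set.Icc (0.5 : ℝ) 1)
    (hqeq : (1 - q)^2 * Real.logb 2 (1 - q) + (1 + q)^2 * Real.logb 2 (1 + q)
      + (1 - q^2) * Real.logb 2 (1 - q^2) = 2)
    (hpq : q < p) (hp1 : p < 1) :
    let α : ℝ := (1 - p) / 2
    let β : ℝ := (1 + p) / 2
    let τ : ℝ → ℝ → ℝ := fun x y =>
      -((p + x) * Real.logb 2 (p + x)) - x * Real.logb 2 x - 2 * y * Real.logb 2 y
        + (p + x + y) * Real.logb 2 (p + x + y) + (x + y) * Real.logb 2 (x + y)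
        + (1 - p) - 2 * (x + y)
    let h : ℝ → ℝ := fun x => -(x * Real.logb 2 x) - (1 - x) * Real.logb 2 (1 - x)
    (∀ x y : ℝ, 0 ≤ x → 0 ≤ y → x + y ≤ (1 - p) / 2 →
      τ x y ≤ -(α^2 * Real.logb 2 (α^2)) - β^2 * Real.logb 2 (β^2)
        - 2 * α * β * Real.logb 2 (α * β) - h α) ∧
    τ (α^2) (α - α^2) = -(α^2 * Real.logb 2 (α^2)) - β^2 * Real.logb 2 (β^2)
        - 2 * α * β * Real.logb 2 (α * β) - h α := by
  have hp0 : (0:ℝ) < p := by have := hq.1; norm_num at this; linarith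
  intro α β τ h
  have hα : (0:ℝ) < α := by simp only [α]; linarith
  have hβ : (0:ℝ) < β := by simp only [β]; linarith
  have hαβ : α + β = 1 := by simp only [α, β]; ring
  constructor
  · -- the inequality
    intro x y hx hy hs
    -- rewrite the RHS using log identities
    have e1 : Real.logb 2 (α^2) = 2 * Real.logb 2 α := by
      rw [show α^2 = α^(2:ℕ) from rfl, Real.logb_pow]; norm_num
    have e2 : Real.logb 2 (β^2) = 2 * Real.logb 2 β := by
      rw [show β^2 = β^(2:ℕ) from rfl, Real.logb_pow]; norm_num
    have e3 : Real.logb 2 (α * β) = Real.logb 2 α + Real.logb 2 β :=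
      Real.logb_mul hα.ne' hβ.ne'
    have e4 : (1:ℝ) - α = β := by simp only [α, β]; ring
    -- Gibbs bounds
    have key1 := gibbs (p + x) y β α (by linarith) hy hβ hα (by linarith)
    have key2 := gibbs x y α β hx hy hα hβ hαβ
    -- the sum-of-logs bound
    have hAB : Real.logb 2 α + Real.logb 2 β + 2 ≤ 0 := by
      have h4 : Real.logb 2 (4:ℝ) = 2 := by
        rw [show (4:ℝ) = 2^(2:ℕ) by norm_num, Real.logb_pow,
          Real.logb_self_eq_one (by norm_num)]
        norm_num
      have hle : α * β ≤ 1/4 := by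
        simp only [α, β]; nlinarith
      have := Real.logb_le_logb_of_le (b := 2) (by norm_num)
        (show (0:ℝ) < α * β by positivity) hle
      rw [show (1/4:ℝ) = (4:ℝ)⁻¹ by norm_num, Real.logb_inv, h4, e3] at this
      linarith
    have hprod : 0 ≤ ((1 - p)/2 - (x + y)) * (-(Real.logb 2 α + Real.logb 2 β) - 2) :=
      mul_nonneg (by linarith) (by linarith)
    simp only [τ, h, e1, e2, e3, e4]
    simp only [α, β] at key1 key2 hprod ⊢
    nlinarith [key1, key2, hprod]
  · -- equality at the maximizer
    simp only [τ, h]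
    rw [show p + α^2 = β^2 from by simp only [α, β]; ring,
      show α - α^2 = α * β from by simp only [α, β]; ring,
      show β^2 + α * β = β from by simp only [α, β]; ring,
      show α^2 + α * β = α from by simp only [α, β]; ring,
      show (1:ℝ) - α = β from by simp only [α, β]; ring]
    have : (1:ℝ) - p = 2 * α := by simp only [α]; ring
    rw [this]
    ring
end

section
/- Let p ∈ (0,1) and for j ≥ 1 define T_j = (1 + (2^j - 1)p)/2^j. Then for each fixed p, the map m ↦ K(m) := 1 - h((1-p)/2) - h(T_m) - (1 - T_m)·log(2^m - 1) + h(T_{m-1}) + (1 - T_{m-1})·log(2^{m-1} - 1) is strictly increasing in m for integers m ≥ 2, where h is the binary entropy and log the base-2 logarithm (with the convention 0·log 0 = 0 so that the term with 2^{m-1}-1 = 1 at m = 2 contributes log 1 = 0). -/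
lemma base_deriv (c x : ℝ) (hxc : 0 < x + c) :
    HasDerivAt (fun y : ℝ => (y + c) * Real.log (y + c)) (Real.log (x + c) + 1) x := by
  have h1 : HasDerivAt (fun y : ℝ => y + c) 1 x := (hasDerivAt_id x).add_const c
  have h2 : HasDerivAt (fun y : ℝ => Real.log (y + c)) ((x + c)⁻¹ * 1) x :=
    by have := (Real.hasDerivAt_log hxc.ne').comp x h1; exact this
  have h3 := h1.mul h2
  exact h3.congr_deriv (by simp [hxc.ne'])

lemma keyF (r : ℝ) (hr : 0 < r) :
    0 < (r+1) * Real.log (r+1) + (r+4) * Real.log (r+4)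
      - 2 * ((r+2) * Real.log (r+2)) - 4 * Real.log 2 := by
  set F : ℝ → ℝ := fun x => (x+1) * Real.log (x+1) + (x+4) * Real.log (x+4)
      - 2 * ((x+2) * Real.log (x+2)) - 4 * Real.log 2 with hF
  have hderiv : ∀ x : ℝ, 0 ≤ x →
      HasDerivAt F (Real.log (x+1) + Real.log (x+4) - 2 * Real.log (x+2)) x := by
    intro x hx
    have d1 := base_deriv 1 x (by linarith)
    have d4 := base_deriv 4 x (by linarith)
    have d2 := (base_deriv 2 x (by linarith)).const_mul 2
    have := ((d1.add d4).sub d2).sub_const (4 * Real.log 2)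
    exact this.congr_deriv (by ring)
  have hmono : StrictMonoOn F (Set.Ici 0) := by
    apply strictMonoOn_of_deriv_pos (convex_Ici 0)
    · intro x hx
      exact (hderiv x hx).continuousAt.continuousWithinAt
    · intro x hx
      rw [interior_Ici, Set.mem_Ioi] at hx
      rw [(hderiv x (le_of_lt hx)).deriv]
      have h1 : Real.log ((x+2)^2) < Real.log ((x+1) * (x+4)) :=
        Real.log_lt_log (by positivity) (by nlinarith)
      rw [Real.log_pow, Real.log_mul (by positivity) (by positivity)] at h1
      push_cast at h1
      linarith
  have h0 : F 0 = 0 := by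
    simp only [hF]
    rw [show (0:ℝ) + 4 = 2^2 by norm_num, Real.log_pow]
    norm_num
    ring
  have := hmono (Set.self_mem_Ici) (Set.mem_Ici.mpr (le_of_lt hr)) hr
  rw [h0] at this
  exact this

lemma keyG (a u : ℝ) (ha : 0 < a) (hu : 0 < u) :
    0 < (a+u) * Real.log (a+u) + (a+4*u) * Real.log (a+4*u)
      - 2 * ((a+2*u) * Real.log (a+2*u)) - u * Real.log u - 4 * u * Real.log 2 := by
  set r := a / u with hr
  have hrpos : 0 < r := div_pos ha hu
  have ha' : a = u * r := by rw [hr]; field_simp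
  have l1 : Real.log (a + u) = Real.log u + Real.log (r + 1) := by
    rw [show a + u = u * (r + 1) by rw [ha']; ring,
      Real.log_mul (ne_of_gt hu) (by positivity)]
  have l2 : Real.log (a + 2*u) = Real.log u + Real.log (r + 2) := by
    rw [show a + 2*u = u * (r + 2) by rw [ha']; ring,
      Real.log_mul (ne_of_gt hu) (by positivity)]
  have l4 : Real.log (a + 4*u) = Real.log u + Real.log (r + 4) := by
    rw [show a + 4*u = u * (r + 4) by rw [ha']; ring,
      Real.log_mul (ne_of_gt hu) (by positivity)]
  rw [l1, l2, l4, ha']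
  have hkey := mul_pos hu (keyF r hrpos)
  nlinarith [hkey]

lemma keyG' (a u : ℝ) (ha : 0 < a) (hu : 0 < u) :
    0 < (a+u) * Real.logb 2 (a+u) + (a+4*u) * Real.logb 2 (a+4*u)
      - 2 * ((a+2*u) * Real.logb 2 (a+2*u)) - u * Real.logb 2 u - 4 * u := by
  have h := keyG a u ha hu
  have hl2 : 0 < Real.log 2 := Real.log_pos (by norm_num)
  have heq : (a+u) * Real.logb 2 (a+u) + (a+4*u) * Real.logb 2 (a+4*u)
      - 2 * ((a+2*u) * Real.logb 2 (a+2*u)) - u * Real.logb 2 u - 4 * u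
      = ((a+u) * Real.log (a+u) + (a+4*u) * Real.log (a+4*u)
      - 2 * ((a+2*u) * Real.log (a+2*u)) - u * Real.log u - 4 * u * Real.log 2)
        / Real.log 2 := by
    simp only [Real.logb]
    field_simp
  rw [heq]
  exact div_pos h hl2

/-- The Devetak–Winter key rate for the Werner state is strictly increasing in the
number m ≥ 2 of trusted players. -/
theorem stmt9 (p : ℝ) (hp : p ∈ Set.Ioo (0 : ℝ) 1) :
    let h : ℝ → ℝ := fun x => -(x * Real.logb 2 x) - (1 - x) * Real.logb 2 (1 - x)
    let T : ℕ → ℝ := fun j => (1 + ((2:ℝ)^j - 1) * p) / 2^j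
    let K : ℕ → ℝ := fun m => 1 - h ((1 - p) / 2) - h (T m)
      - (1 - T m) * Real.logb 2 ((2:ℝ)^m - 1)
      + h (T (m - 1)) + (1 - T (m - 1)) * Real.logb 2 ((2:ℝ)^(m-1) - 1)
    ∀ m : ℕ, 2 ≤ m → K m < K (m + 1) := by
  obtain ⟨hp0, hp1⟩ := hp
  intro h T K m hm
  obtain ⟨n, rfl⟩ : ∃ n, m = n + 2 := ⟨m - 2, by omega⟩
  have hq : 0 < 1 - p := by linarith
  -- powers
  have hN1 : (0:ℝ) < 2^(n+1) := by positivity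
  have hN2 : (2:ℝ)^(n+2) = 2 * 2^(n+1) := by ring
  have hN3 : (2:ℝ)^(n+3) = 4 * 2^(n+1) := by ring
  set u : ℝ := (1 - p) / 2^(n+3) with hu_def
  have hu : 0 < u := by positivity
  have hu3 : (1 - p) = 2^(n+3) * u := by rw [hu_def]; field_simp
  -- T values
  have hT3 : T (n+3) = p + u := by
    simp only [T]
    rw [hu_def]
    field_simp
    ring
  have hT2 : T (n+2) = p + 2*u := by
    simp only [T]
    rw [hu_def, hN2, hN3]
    field_simp
    ring
  have hT1 : T (n+1) = p + 4*u := by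
    simp only [T]
    rw [hu_def, hN3]
    field_simp
    ring
  -- log expansions
  have hgt1 : (1:ℝ) < 2^(n+1) := one_lt_pow₀ (by norm_num) (by omega)
  have hne3 : ((2:ℝ)^(n+3) - 1) ≠ 0 := by rw [hN3]; nlinarith
  have hne2 : ((2:ℝ)^(n+2) - 1) ≠ 0 := by rw [hN2]; nlinarith
  have hne1 : ((2:ℝ)^(n+1) - 1) ≠ 0 := by nlinarith
  have lb2 : Real.logb 2 2 = 1 := by simp
  have e3 : Real.logb 2 (1 - (p + u))
      = Real.logb 2 ((2:ℝ)^(n+3) - 1) + Real.logb 2 u := by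
    rw [show 1 - (p + u) = ((2:ℝ)^(n+3) - 1) * u by rw [hu_def]; field_simp; ring,
      Real.logb_mul hne3 (ne_of_gt hu)]
  have e2 : Real.logb 2 (1 - (p + 2*u))
      = Real.logb 2 ((2:ℝ)^(n+2) - 1) + (1 + Real.logb 2 u) := by
    rw [show 1 - (p + 2*u) = ((2:ℝ)^(n+2) - 1) * (2 * u) by
        rw [hu_def, hN2, hN3]; field_simp; ring,
      Real.logb_mul hne2 (by positivity),
      Real.logb_mul (by norm_num) (ne_of_gt hu), lb2]
  have e1 : Real.logb 2 (1 - (p + 4*u))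
      = Real.logb 2 ((2:ℝ)^(n+1) - 1) + (2 + Real.logb 2 u) := by
    rw [show 1 - (p + 4*u) = ((2:ℝ)^(n+1) - 1) * (2 * (2 * u)) by
        rw [hu_def, hN3]; field_simp; ring,
      Real.logb_mul hne1 (by positivity),
      Real.logb_mul (by norm_num) (by positivity),
      Real.logb_mul (by norm_num) (ne_of_gt hu), lb2]
    ring
  rw [← sub_pos]
  have main : K (n + 2 + 1) - K (n + 2)
      = (p+u) * Real.logb 2 (p+u) + (p+4*u) * Real.logb 2 (p+4*u)
        - 2 * ((p+2*u) * Real.logb 2 (p+2*u)) - u * Real.logb 2 u - 4 * u := by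
    show K (n+3) - K (n+2) = _
    simp only [K, h, show n+3-1 = n+2 from rfl, show n+2-1 = n+1 from rfl, hT1, hT2, hT3]
    rw [e1, e2, e3]
    ring
  rw [main]
  exact keyG' p u hp0 hu
end

section
/- Let p ∈ [0,1] and consider X, Z ∈ {0,1} with P(X=0) = P(X=1) = 1/2 and P(Z = X) = (1 + p)/2, P(Z ≠ X) = (1 - p)/2. If p > q, where q ∈ [0.5,1] solves (1-q)²log(1-q)+(1+q)²log(1+q)+(1-q²)log(1-q²)=2, then I(X:Z) - [-α²·log α² - β²·log β² - 2αβ·log(αβ) - h(α)] ≥ 1 + α²·log α² + β²·log β² + 2αβ·log(αβ) > 0, where α = (1-p)/2, β = (1+p)/2. -/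
/-- The threshold function F. -/
noncomputable def Fq (x : ℝ) : ℝ :=
  (1 - x)^2 * Real.logb 2 (1 - x) + (1 + x)^2 * Real.logb 2 (1 + x)
    + (1 - x^2) * Real.logb 2 (1 - x^2)

lemma Fq_cont : Continuous Fq := by
  have h : Fq = fun x => ((1-x) * ((1-x) * Real.log (1-x)) + (1+x) * ((1+x) * Real.log (1+x))
      + (1 - x^2) * Real.log (1 - x^2)) / Real.log 2 := by
    funext x; simp [Fq, Real.logb]; ring
  rw [h]
  apply Continuous.div_const
  have c1 : Continuous fun x : ℝ => (1 - x) := by continuity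
  have c2 : Continuous fun x : ℝ => (1 + x) := by continuity
  have c3 : Continuous fun x : ℝ => (1 - x^2) := by continuity
  exact ((c1.mul (Real.continuous_mul_log.comp c1)).add
    (c2.mul (Real.continuous_mul_log.comp c2))).add
    (Real.continuous_mul_log.comp c3)

lemma Fq_hasDerivAt (x : ℝ) (h1 : 0 < 1 - x) (h2 : 0 < 1 + x) :
    HasDerivAt Fq ((2 * Real.log (1+x) - 2 * Real.log (1-x)) / Real.log 2) x := by
  have hne1 : (1 - x) ≠ 0 := h1.ne'
  have hne2 : (1 + x) ≠ 0 := h2.ne'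
  have hne3 : (1 - x^2) ≠ 0 := by
    have : (1:ℝ) - x^2 = (1-x)*(1+x) := by ring
    rw [this]; exact mul_ne_zero hne1 hne2
  have hu1 : HasDerivAt (fun y : ℝ => 1 - y) (-1) x := by
    simpa using (hasDerivAt_id x).const_sub 1
  have hu2 : HasDerivAt (fun y : ℝ => 1 + y) 1 x := by
    simpa using (hasDerivAt_id x).const_add 1
  have hu3 : HasDerivAt (fun y : ℝ => 1 - y^2) (-(2*x)) x := by
    simpa using (hasDerivAt_pow 2 x).const_sub 1
  have hl1 : HasDerivAt (fun y : ℝ => Real.log (1 - y)) (-1 / (1 - x)) x := hu1.log hne1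
  have hl2 : HasDerivAt (fun y : ℝ => Real.log (1 + y)) (1 / (1 + x)) x := hu2.log hne2
  have hl3 : HasDerivAt (fun y : ℝ => Real.log (1 - y^2)) (-(2*x) / (1 - x^2)) x := hu3.log hne3
  have t1 := ((hu1.pow 2).mul hl1)
  have t2 := ((hu2.pow 2).mul hl2)
  have t3 := (hu3.mul hl3)
  have key := (((t1.add t2).add t3).div_const (Real.log 2))
  have hFq : Fq = fun y => ((1-y)^2 * Real.log (1-y) + (1+y)^2 * Real.log (1+y)
      + (1-y^2) * Real.log (1-y^2)) / Real.log 2 := by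
    funext y; simp [Fq, Real.logb]; ring
  rw [hFq]
  convert key using 1
  case e'_4 => rfl
  case e'_5 => rfl
  case e'_8 => rfl
  have e4 : Real.log (1 - x^2) = Real.log (1-x) + Real.log (1+x) := by
    rw [show (1:ℝ) - x^2 = (1-x)*(1+x) by ring, Real.log_mul hne1 hne2]
  rw [e4]
  simp only [Pi.pow_apply]
  field_simp
  ring

lemma Fq_strictMono {q : ℝ} (hq : 0 < q) : StrictMonoOn Fq (Set.Icc q 1) := by
  apply strictMonoOn_of_deriv_pos (convex_Icc q 1) Fq_cont.continuousOn
  intro x hx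
  rw [interior_Icc] at hx
  have h1 : 0 < 1 - x := by linarith [hx.2]
  have h2 : 0 < 1 + x := by linarith [hx.1, hq]
  rw [(Fq_hasDerivAt x h1 h2).deriv]
  apply div_pos
  · have hx0 : 0 < x := lt_trans hq hx.1
    have : Real.log (1 - x) < Real.log (1 + x) :=
      Real.log_lt_log h1 (by linarith)
    linarith
  · exact Real.log_pos (by norm_num)

lemma tau_eq (p : ℝ) (ha : 0 < 1 - p) (hb : 0 < 1 + p) :
    1 + ((1-p)/2)^2 * Real.logb 2 (((1-p)/2)^2)
      + ((1+p)/2)^2 * Real.logb 2 (((1+p)/2)^2)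
      + 2 * ((1-p)/2) * ((1+p)/2) * Real.logb 2 (((1-p)/2) * ((1+p)/2))
    = -1 + Fq p / 2 := by
  have hne1 : (1 - p) ≠ 0 := ha.ne'
  have hne2 : (1 + p) ≠ 0 := hb.ne'
  have h2ne : (2:ℝ) ≠ 0 := two_ne_zero
  have hl2 : Real.log 2 ≠ 0 := Real.log_ne_zero_of_pos_of_ne_one (by norm_num) (by norm_num)
  have e1 : Real.log (((1-p)/2)^2) = 2 * (Real.log (1-p) - Real.log 2) := by
    rw [Real.log_pow, Real.log_div hne1 h2ne]; push_cast; ring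
  have e2 : Real.log (((1+p)/2)^2) = 2 * (Real.log (1+p) - Real.log 2) := by
    rw [Real.log_pow, Real.log_div hne2 h2ne]; push_cast; ring
  have e3 : Real.log (((1-p)/2) * ((1+p)/2))
      = (Real.log (1-p) - Real.log 2) + (Real.log (1+p) - Real.log 2) := by
    rw [Real.log_mul (div_ne_zero hne1 h2ne) (div_ne_zero hne2 h2ne),
      Real.log_div hne1 h2ne, Real.log_div hne2 h2ne]
  have e4 : Real.log (1 - p^2) = Real.log (1-p) + Real.log (1+p) := by
    rw [show (1:ℝ) - p^2 = (1-p)*(1+p) by ring, Real.log_mul hne1 hne2]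
  simp only [Fq, Real.logb, e1, e2, e3, e4]
  field_simp
  ring

/-- For p > q (q the threshold root), the key-rate bound
I(X:Z) - χ-bound ≥ τ̃(p) > 0, where I(X:Z) = 1 - h(α). -/
theorem stmt12 (q p : ℝ)
    (hq : q ∈ Set.Icc (0.5 : ℝ) 1)
    (hqeq : (1 - q)^2 * Real.logb 2 (1 - q) + (1 + q)^2 * Real.logb 2 (1 + q)
      + (1 - q^2) * Real.logb 2 (1 - q^2) = 2)
    (hp : p ∈ Set.Icc (0 : ℝ) 1) (hpq : q < p) :
    let α : ℝ := (1 - p) / 2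
    let β : ℝ := (1 + p) / 2
    let h : ℝ → ℝ := fun x => -(x * Real.logb 2 x) - (1 - x) * Real.logb 2 (1 - x)
    let IXZ : ℝ := 1 - h α
    let χbound : ℝ := -(α^2 * Real.logb 2 (α^2)) - β^2 * Real.logb 2 (β^2)
      - 2 * α * β * Real.logb 2 (α * β) - h α
    let τ : ℝ := 1 + α^2 * Real.logb 2 (α^2) + β^2 * Real.logb 2 (β^2)
      + 2 * α * β * Real.logb 2 (α * β)
    IXZ - χbound ≥ τ ∧ 0 < τ := by
  obtain ⟨hq0, hq1⟩ := hq
  obtain ⟨hp0, hp1⟩ := hp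
  intro α β h IXZ χbound τ
  constructor
  · simp only [IXZ, χbound, τ, h, α, β]
    ring_nf
    exact le_refl _
  · have hqpos : (0:ℝ) < q := by linarith
    have hFqq : Fq q = 2 := by simpa [Fq] using hqeq
    have hqmem : q ∈ Set.Icc q 1 := ⟨le_refl q, hq1⟩
    have hpmem : p ∈ Set.Icc q 1 := ⟨le_of_lt hpq, hp1⟩
    have hFp : 2 < Fq p := by
      have := Fq_strictMono hqpos hqmem hpmem hpq
      linarith [hFqq ▸ this]
    simp only [τ, α, β]
    rcases eq_or_lt_of_le hp1 with hp1' | hp1'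
    · subst hp1'
      norm_num
    · rw [tau_eq p (by linarith) (by linarith)]
      linarith
end

section
/- Let |ψ⟩ = √p|Ψ₀⁺⟩ + √(1-p)|Ψ₂⁺⟩ with |Ψ₀⁺⟩ = (|000⟩+|111⟩)/√2, |Ψ₂⁺⟩ = (|010⟩+|101⟩)/√2, and suppose Alice (qubit 1) and Charlie (qubit 3) both measure in the X basis {(|0⟩±|1⟩)/√2}, obtaining bits m_A and m_C. Then the probability that m_A = m_C equals 1/2 + √(p(1-p)), and hence the mutual information I(m_A : m_C) = 1 - h(1/2 + √(p(1-p))), which is strictly positive whenever p ∉ {0, 1, 1/2}. -/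
/-- If Alice and Charlie measure qubits 1 and 3 of
|ψ⟩ = √p|Ψ₀⁺⟩ + √(1-p)|Ψ₂⁺⟩ in the X basis, then P(m_A = m_C) = 1/2 + √(p(1-p)),
and the mutual information 1 - h(P(m_A = m_C)) is positive for p ∉ {0, 1, 1/2}. -/
theorem stmt14 (p : ℝ) (hp : p ∈ Set.Icc (0 : ℝ) 1) :
    let h : ℝ → ℝ := fun x => -(x * Real.logb 2 x) - (1 - x) * Real.logb 2 (1 - x)
    -- amplitudes of |ψ⟩ in the computational basis (qubits 1,2,3)
    let ψ : Fin 2 → Fin 2 → Fin 2 → ℂ := fun i j k =>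
      (if (i, j, k) = (0, 0, 0) ∨ (i, j, k) = (1, 1, 1)
        then ((Real.sqrt p / Real.sqrt 2 : ℝ) : ℂ) else 0)
      + (if (i, j, k) = (0, 1, 0) ∨ (i, j, k) = (1, 0, 1)
        then ((Real.sqrt (1 - p) / Real.sqrt 2 : ℝ) : ℂ) else 0)
    -- X-basis vector |x_a⟩ = (|0⟩ + (-1)^a|1⟩)/√2
    let xv : Fin 2 → Fin 2 → ℂ := fun a i =>
      (if a = 1 ∧ i = 1 then (-1 : ℂ) else 1) / ((Real.sqrt 2 : ℝ) : ℂ)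
    -- amplitude of outcome (a, c) on qubits 1 and 3, middle qubit left in state b
    let amp : Fin 2 → Fin 2 → Fin 2 → ℂ := fun a b c =>
      ∑ i : Fin 2, ∑ k : Fin 2, (starRingEnd ℂ) (xv a i * xv c k) * ψ i b k
    -- probability that m_A = m_C
    let probEq : ℝ := ∑ a : Fin 2, ∑ b : Fin 2, Complex.normSq (amp a b a)
    probEq = 1 / 2 + Real.sqrt (p * (1 - p)) ∧
    (p ≠ 0 → p ≠ 1 → p ≠ 1 / 2 → 0 < 1 - h probEq) := by
  intro h ψ xv amp probEq
  have hpow : ((Real.sqrt 2 : ℝ) : ℂ)⁻¹ ^ 3 = ((Real.sqrt 2 : ℝ) : ℂ)⁻¹ * (1/2) := by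
    have ht : ((Real.sqrt 2 : ℝ) : ℂ) * ((Real.sqrt 2 : ℝ) : ℂ) = 2 := by
      exact_mod_cast congrArg Complex.ofReal (Real.mul_self_sqrt (by norm_num : (0:ℝ) ≤ 2))
    rw [pow_succ, sq, ← mul_inv, ht]
    ring
  have key : ∀ a b : Fin 2, amp a b a
      = (((Real.sqrt p + Real.sqrt (1-p)) / (2 * Real.sqrt 2) : ℝ) : ℂ) := by
    intro a b
    fin_cases a <;> fin_cases b <;>
      · simp only [amp, ψ, xv, Fin.sum_univ_two]
        norm_num [Prod.ext_iff]
        ring_nf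
        rw [hpow]
        ring
  have hs2 : Real.sqrt 2 * Real.sqrt 2 = 2 := Real.mul_self_sqrt (by norm_num)
  have h2 : Real.sqrt 2 ≠ 0 := by positivity
  have hsp : Real.sqrt p * Real.sqrt p = p := Real.mul_self_sqrt hp.1
  have hsq : Real.sqrt (1-p) * Real.sqrt (1-p) = 1 - p :=
    Real.mul_self_sqrt (by linarith [hp.2])
  have hpq : Real.sqrt p * Real.sqrt (1-p) = Real.sqrt (p*(1-p)) :=
    (Real.sqrt_mul hp.1 _).symm
  have hmain : probEq = 1 / 2 + Real.sqrt (p * (1 - p)) := by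
    simp only [probEq, Fin.sum_univ_two, key, Complex.normSq_ofReal]
    field_simp
    nlinarith [hsp, hsq, hpq, hs2]
  refine ⟨hmain, fun hp0 hp1 _ => ?_⟩
  have hppos : 0 < p := lt_of_le_of_ne hp.1 (Ne.symm hp0)
  have hplt : p < 1 := lt_of_le_of_ne hp.2 hp1
  have hspos : 0 < Real.sqrt (p * (1 - p)) :=
    Real.sqrt_pos.2 (by nlinarith)
  have hqne : probEq ≠ 2⁻¹ := by
    rw [hmain]; intro hcontra
    rw [show (2:ℝ)⁻¹ = 1/2 by norm_num] at hcontra; linarith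
  have hbe : Real.binEntropy probEq < Real.log 2 := Real.binEntropy_lt_log_two.2 hqne
  have hh : h probEq = Real.binEntropy probEq / Real.log 2 := by
    simp only [h, Real.binEntropy, Real.logb, Real.log_inv]
    ring
  rw [hh]
  have hl2 : 0 < Real.log 2 := Real.log_pos (by norm_num)
  rw [sub_pos, div_lt_one hl2]
  exact hbe
end

section
/- For p ∈ (0,1), α = (1-p)/2, β = (1+p)/2, and x ∈ [0, α], define φ(x) = -(p+x)log(p+x) - x log x - 2(α - x)log(α - x) + (p + α)log(p + α) + α log α + (1-p) - 2α. Then φ attains its maximum on [0, α] at x = α², and φ(α²) = -α² log α² - β² log β² - 2αβ log(αβ) - h(α). -/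
noncomputable def Fb (p x : ℝ) : ℝ :=
  -((p + x) * Real.log (p + x)) - x * Real.log x
    - 2 * (((1 - p) / 2 - x) * Real.log ((1 - p) / 2 - x))

lemma Fb_cont (p : ℝ) : Continuous (Fb p) := by
  have c1 : Continuous fun x : ℝ => (p + x) * Real.log (p + x) :=
    Real.continuous_mul_log.comp (continuous_const.add continuous_id)
  have c3 : Continuous fun x : ℝ => ((1 - p) / 2 - x) * Real.log ((1 - p) / 2 - x) :=
    Real.continuous_mul_log.comp (continuous_const.sub continuous_id)
  exact (c1.neg.sub Real.continuous_mul_log).sub (continuous_const.mul c3)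

lemma Fb_deriv (p : ℝ) (hp0 : 0 < p) {x : ℝ} (hx0 : 0 < x) (hxA : x < (1 - p) / 2) :
    HasDerivAt (Fb p) (2 * Real.log ((1 - p) / 2 - x) - Real.log (p + x) - Real.log x) x := by
  have hpx : p + x ≠ 0 := by positivity
  have hAx : (1 - p) / 2 - x ≠ 0 := by linarith
  have h1 : HasDerivAt (fun x : ℝ => (p + x) * Real.log (p + x)) ((Real.log (p + x) + 1) * 1) x :=
    (Real.hasDerivAt_mul_log hpx).comp x ((hasDerivAt_id x).const_add p)
  have h2 : HasDerivAt (fun x : ℝ => x * Real.log x) (Real.log x + 1) x :=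
    Real.hasDerivAt_mul_log hx0.ne'
  have h3 : HasDerivAt (fun x : ℝ => ((1 - p) / 2 - x) * Real.log ((1 - p) / 2 - x))
      ((Real.log ((1 - p) / 2 - x) + 1) * (-1)) x :=
    (Real.hasDerivAt_mul_log hAx).comp x ((hasDerivAt_id x).const_sub ((1 - p) / 2))
  have := (h1.neg.sub h2).sub ((h3.const_mul 2))
  exact this.congr_deriv (by ring)

lemma Fb_max (p : ℝ) (hp0 : 0 < p) (hp1 : p < 1) :
    ∀ x ∈ Set.Icc (0 : ℝ) ((1 - p) / 2), Fb p x ≤ Fb p (((1 - p) / 2) ^ 2) := by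
  set A : ℝ := (1 - p) / 2 with hA
  have hA0 : 0 < A := by rw [hA]; linarith
  have hA1 : A < 1 := by rw [hA]; linarith
  have hA2 : A ^ 2 < A := by nlinarith
  have hA20 : 0 < A ^ 2 := by positivity
  have hmono : StrictMonoOn (Fb p) (Set.Icc 0 (A ^ 2)) := by
    apply strictMonoOn_of_deriv_pos (convex_Icc _ _) (Fb_cont p).continuousOn
    intro x hx
    rw [interior_Icc] at hx
    have hx0 := hx.1
    have hxA : x < A := lt_trans hx.2 hA2
    rw [(Fb_deriv p hp0 hx0 hxA).deriv]
    have hkey : x * (p + x) < (A - x) ^ 2 := by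
      have : (A - x) ^ 2 = x * (p + x) + (A ^ 2 - x) := by rw [hA]; ring
      nlinarith [hx.2]
    have hpos : 0 < x * (p + x) := by positivity
    have := Real.log_lt_log hpos hkey
    rw [Real.log_mul hx0.ne' (by positivity), Real.log_pow] at this
    push_cast at this
    linarith
  have hanti : StrictAntiOn (Fb p) (Set.Icc (A ^ 2) A) := by
    apply strictAntiOn_of_deriv_neg (convex_Icc _ _) (Fb_cont p).continuousOn
    intro x hx
    rw [interior_Icc] at hx
    have hx0 : 0 < x := lt_trans hA20 hx.1
    have hxA : x < A := hx.2
    rw [(Fb_deriv p hp0 hx0 hxA).deriv]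
    have hkey : (A - x) ^ 2 < x * (p + x) := by
      have : (A - x) ^ 2 = x * (p + x) + (A ^ 2 - x) := by rw [hA]; ring
      nlinarith [hx.1]
    have hAxp : 0 < A - x := sub_pos.2 hxA
    have hpos : 0 < (A - x) ^ 2 := by positivity
    have := Real.log_lt_log hpos hkey
    rw [Real.log_mul hx0.ne' (by positivity), Real.log_pow] at this
    push_cast at this
    linarith
  intro x hx
  rcases le_or_gt x (A ^ 2) with hle | hlt
  · exact hmono.monotoneOn ⟨hx.1, hle⟩ ⟨hA20.le, le_rfl⟩ hle
  · exact hanti.antitoneOn ⟨le_rfl, hA2.le⟩ ⟨hlt.le, hx.2⟩ hlt.le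

/-- The boundary restriction φ(x) = τ(x, α - x) attains its maximum on [0, α]
at x = α², where φ(α²) = -α²log₂α² - β²log₂β² - 2αβ·log₂(αβ) - h(α). -/
theorem stmt19 (p : ℝ) (hp : p ∈ Set.Ioo (0 : ℝ) 1) :
    let α : ℝ := (1 - p) / 2
    let β : ℝ := (1 + p) / 2
    let h : ℝ → ℝ := fun x => -(x * Real.logb 2 x) - (1 - x) * Real.logb 2 (1 - x)
    let φ : ℝ → ℝ := fun x =>
      -((p + x) * Real.logb 2 (p + x)) - x * Real.logb 2 x
        - 2 * (α - x) * Real.logb 2 (α - x)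
        + (p + α) * Real.logb 2 (p + α) + α * Real.logb 2 α + (1 - p) - 2 * α
    (∀ x ∈ Set.Icc (0 : ℝ) α, φ x ≤ φ (α^2)) ∧
    φ (α^2) = -(α^2 * Real.logb 2 (α^2)) - β^2 * Real.logb 2 (β^2)
      - 2 * α * β * Real.logb 2 (α * β) - h α := by
  obtain ⟨hp0, hp1⟩ := hp
  simp only []
  constructor
  · have key := Fb_max p hp0 hp1
    have hφ : ∀ y : ℝ,
        -((p + y) * Real.logb 2 (p + y)) - y * Real.logb 2 y
          - 2 * ((1 - p) / 2 - y) * Real.logb 2 ((1 - p) / 2 - y)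
          + (p + (1 - p) / 2) * Real.logb 2 (p + (1 - p) / 2)
          + (1 - p) / 2 * Real.logb 2 ((1 - p) / 2) + (1 - p) - 2 * ((1 - p) / 2)
        = Fb p y / Real.log 2 + ((p + (1 - p) / 2) * Real.log (p + (1 - p) / 2)
            + (1 - p) / 2 * Real.log ((1 - p) / 2)) / Real.log 2 := by
      intro y
      simp only [Fb, Real.logb]
      ring
    intro x hx
    have hl2 : (0 : ℝ) < Real.log 2 := Real.log_pos one_lt_two
    rw [hφ x, hφ (((1 - p) / 2) ^ 2)]
    gcongr
    exact key x hx
  · have e1 : p + ((1 - p) / 2) ^ 2 = ((1 + p) / 2) ^ 2 := by ring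
    have e2 : (1 - p) / 2 - ((1 - p) / 2) ^ 2 = (1 - p) / 2 * ((1 + p) / 2) := by ring
    have e3 : p + (1 - p) / 2 = (1 + p) / 2 := by ring
    have e4 : 1 - (1 - p) / 2 = (1 + p) / 2 := by ring
    rw [e1, e2, e3, e4]
    ring
end
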